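/- arXiv:2510.22195 — 5 statements merged into one kernel-verified Lean document; each statement's English description precedes it below -/
import Mathlib

section
/- The eigenvalues of the 4×4 effective Hamiltonian H⁽²⁾_eff (as defined via ε, Γ, U, U', v') are exactly E₁ = 2ε+U-2iΓ, E₂ = 2ε+U'-2iΓ, and E₃± = 2ε+Ū-2iΓ ± ξ/2, where Ū = (U+U')/2, ΔU = U-U', and ξ is a complex square root of (ΔU)² + 16(v'-iΓ)². -/
open Complex Matrix

lemma key_det (A B w ξ μ : ℂ) (hξ : ξ ^ 2 = (A - B) ^ 2 + 16 * w ^ 2) :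
    (μ • (1 : Matrix (Fin 4) (Fin 4) ℂ) -
      !![A, w, w, 0; w, B, 0, w; w, 0, B, w; 0, w, w, A]).det =
    (μ - A) * (μ - B) *
      ((μ - ((A + B) / 2 + ξ / 2)) * (μ - ((A + B) / 2 - ξ / 2))) := by
  simp [Matrix.det_succ_row_zero, Fin.sum_univ_succ, Matrix.smul_apply, Matrix.one_apply]; simp +decide [Fin.succAbove]
  linear_combination ((μ - A) * (μ - B) / 4) * hξ

theorem stmt_2 (ε Γ U U' v' : ℝ) (ξ : ℂ)
    (hξ : ξ ^ 2 = ((U - U' : ℝ) : ℂ) ^ 2 + 16 * ((v' : ℂ) - I * Γ) ^ 2)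
    (H : Matrix (Fin 4) (Fin 4) ℂ)
    (hH : H = !![2 * ε + U - 2 * I * Γ, (v' : ℂ) - I * Γ, (v' : ℂ) - I * Γ, 0;
                 (v' : ℂ) - I * Γ, 2 * ε + U' - 2 * I * Γ, 0, (v' : ℂ) - I * Γ;
                 (v' : ℂ) - I * Γ, 0, 2 * ε + U' - 2 * I * Γ, (v' : ℂ) - I * Γ;
                 0, (v' : ℂ) - I * Γ, (v' : ℂ) - I * Γ, 2 * ε + U - 2 * I * Γ]) :
    ∀ μ : ℂ, (μ • (1 : Matrix (Fin 4) (Fin 4) ℂ) - H).det = 0 ↔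
      (μ = 2 * ε + U - 2 * I * Γ ∨ μ = 2 * ε + U' - 2 * I * Γ ∨
       μ = 2 * ε + ((U + U') / 2 : ℝ) - 2 * I * Γ + ξ / 2 ∨
       μ = 2 * ε + ((U + U') / 2 : ℝ) - 2 * I * Γ - ξ / 2) := by
  intro μ
  subst hH
  have hA : (2 * ε + U - 2 * I * Γ : ℂ) - (2 * ε + U' - 2 * I * Γ) = ((U - U' : ℝ) : ℂ) := by
    push_cast; ring
  have hd := key_det (2 * ε + U - 2 * I * Γ) (2 * ε + U' - 2 * I * Γ) ((v' : ℂ) - I * Γ) ξ μ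
    (by rw [hA]; exact hξ)
  rw [hd]
  have hc : ((2 * ε + U - 2 * I * Γ : ℂ) + (2 * ε + U' - 2 * I * Γ)) / 2 =
      2 * ε + ((U + U') / 2 : ℝ) - 2 * I * Γ := by push_cast; ring
  rw [hc]
  simp only [mul_eq_zero, sub_eq_zero]
  tauto
end

section
/- At the exceptional point v' = 0 and ΔU = U - U' = 4Γ with Γ > 0, the 4×4 matrix H⁽²⁾_eff is not diagonalizable: the eigenvalue 2ε+Ū-2iΓ has algebraic multiplicity 2 but geometric multiplicity 1, so the Jordan normal form of H⁽²⁾_eff contains a 2×2 Jordan block. -/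
set_option maxHeartbeats 4000000

open Complex Matrix Polynomial

private lemma smul_one_eq_diag (a : ℂ) :
    a • (1 : Matrix (Fin 4) (Fin 4) ℂ) = Matrix.diagonal (fun _ => a) := by
  rw [Matrix.smul_eq_diagonal_mul, Matrix.mul_one]

private lemma eval_charpoly_aux (M : Matrix (Fin 4) (Fin 4) ℂ) (r : ℂ) :
    M.charpoly.eval r = (r • (1 : Matrix (Fin 4) (Fin 4) ℂ) - M).det := by
  rw [Matrix.charpoly, _root_.eval_det, Matrix.matPolyEquiv_charmatrix]
  congr 1
  simp [Matrix.scalar_apply, smul_one_eq_diag]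

open Complex Matrix

theorem stmt_5 (ε Γ U U' : ℝ) (hΓ : 0 < Γ) (hEP : U - U' = 4 * Γ)
    (H : Matrix (Fin 4) (Fin 4) ℂ)
    (hH : H = !![2 * ε + U - 2 * I * Γ, -(I * Γ), -(I * Γ), 0;
                 -(I * Γ), 2 * ε + U' - 2 * I * Γ, 0, -(I * Γ);
                 -(I * Γ), 0, 2 * ε + U' - 2 * I * Γ, -(I * Γ);
                 0, -(I * Γ), -(I * Γ), 2 * ε + U - 2 * I * Γ])
    (lam : ℂ) (hlam : lam = 2 * ε + ((U + U') / 2 : ℝ) - 2 * I * Γ) :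
    (Matrix.charpoly H).rootMultiplicity lam = 2 ∧
    Module.finrank ℂ ↥(Module.End.eigenspace (Matrix.toLin' H) lam) = 1 ∧
    ¬ ∃ (P : Matrix (Fin 4) (Fin 4) ℂ) (d : Fin 4 → ℂ),
        IsUnit P.det ∧ P⁻¹ * H * P = Matrix.diagonal d := by
  have hU : U = U' + 4 * Γ := by linarith
  subst hU
  have hΓc : (Γ:ℂ) ≠ 0 := by exact_mod_cast hΓ.ne'
  have hΓc2 : (2:ℂ) * Γ ≠ 0 := by simpa using hΓc
  have hlam' : lam = 2 * (ε:ℂ) + U' + 2 * Γ - 2 * I * Γ := by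
    rw [hlam]; push_cast; ring
  clear hlam
  -- charpoly computation
  have hcp : H.charpoly
      = (X - C lam)^2 * ((X - C (lam + 2*Γ)) * (X - C (lam - 2*Γ))) := by
    rw [hH, Matrix.charpoly]
    have hcm : charmatrix !![2 * (ε:ℂ) + ↑(U' + 4*Γ) - 2 * I * Γ, -(I * Γ), -(I * Γ), 0;
                   -(I * Γ), 2 * ε + U' - 2 * I * Γ, 0, -(I * Γ);
                   -(I * Γ), 0, 2 * ε + U' - 2 * I * Γ, -(I * Γ);
                   0, -(I * Γ), -(I * Γ), 2 * ε + ↑(U' + 4*Γ) - 2 * I * Γ] =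
        !![X - C (2 * (ε:ℂ) + ↑(U' + 4*Γ) - 2 * I * Γ), C (I * Γ), C (I * Γ), 0;
           C (I * Γ), X - C (2 * ε + U' - 2 * I * Γ), 0, C (I * Γ);
           C (I * Γ), 0, X - C (2 * ε + U' - 2 * I * Γ), C (I * Γ);
           0, C (I * Γ), C (I * Γ), X - C (2 * ε + ↑(U' + 4*Γ) - 2 * I * Γ)] := by
      ext i j
      fin_cases i <;> fin_cases j <;>
        first
          | (rw [charmatrix_apply_eq]; simp)
          | (rw [charmatrix_apply_ne _ _ _ (by decide)]; simp)
    rw [hcm, hlam']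
    have h12 : (Fin.succAbove 1 2 : Fin 4) = 3 := by decide
    have h22 : (Fin.succAbove 2 2 : Fin 4) = 3 := by decide
    have hCI : (C I)^2 = (-1 : Polynomial ℂ) := by
      rw [← map_pow, I_sq, _root_.map_neg, _root_.map_one]
    push_cast
    simp [Matrix.det_succ_row_zero, Fin.sum_univ_succ, h12, h22]
    simp only [map_add, map_sub, _root_.map_mul, _root_.map_neg, map_ofNat]
    linear_combination (-4*(C (Γ:ℂ))^2*(C (U':ℂ))^2 + -16*(C (Γ:ℂ))^3*(C (U':ℂ)) + 16*(C (Γ:ℂ))^3*(C (U':ℂ))*(C I) + 32*(C (Γ:ℂ))^4*(C I) + -16*(C (Γ:ℂ))^4*(C I)^2 + -16*(C (ε:ℂ))*(C (Γ:ℂ))^2*(C (U':ℂ)) + -32*(C (ε:ℂ))*(C (Γ:ℂ))^3 + 32*(C (ε:ℂ))*(C (Γ:ℂ))^3*(C I) + -16*(C (ε:ℂ))^2*(C (Γ:ℂ))^2 + 8*X*(C (Γ:ℂ))^2*(C (U':ℂ)) + 16*X*(C (Γ:ℂ))^3 + -16*X*(C (Γ:ℂ))^3*(C I) + 16*X*(C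 (ε:ℂ))*(C (Γ:ℂ))^2 + -4*X^2*(C (Γ:ℂ))^2) * hCI
  refine ⟨?_, ?_, ?_⟩
  · -- root multiplicity
    rw [hcp]
    have f1 : (X - C lam)^2 ≠ (0 : Polynomial ℂ) :=
      pow_ne_zero _ (Polynomial.X_sub_C_ne_zero lam)
    have f2 : (X - C (lam + 2*Γ)) ≠ (0 : Polynomial ℂ) := Polynomial.X_sub_C_ne_zero _
    have f3 : (X - C (lam - 2*Γ)) ≠ (0 : Polynomial ℂ) := Polynomial.X_sub_C_ne_zero _
    rw [Polynomial.rootMultiplicity_mul (mul_ne_zero f1 (mul_ne_zero f2 f3)),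
        Polynomial.rootMultiplicity_mul (mul_ne_zero f2 f3),
        Polynomial.rootMultiplicity_X_sub_C_pow,
        Polynomial.rootMultiplicity_X_sub_C, Polynomial.rootMultiplicity_X_sub_C]
    rw [if_neg (fun h => hΓc2 (by linear_combination -h)),
        if_neg (fun h => hΓc2 (by linear_combination h))]
  · -- eigenspace dimension
    have heig : Module.End.eigenspace (Matrix.toLin' H) lam
        = Submodule.span ℂ {![I, 1, 1, I]} := by
      apply le_antisymm
      · intro x hx
        rw [Module.End.mem_eigenspace_iff, Matrix.toLin'_apply, hH] at hx
        have h0 := congrFun hx 0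
        have h1 := congrFun hx 1
        have h2 := congrFun hx 2
        have h3 := congrFun hx 3
        simp [Matrix.mulVec, dotProduct, Fin.sum_univ_four, hlam'] at h0 h1 h2 h3
        rw [Submodule.mem_span_singleton]
        refine ⟨x 1, ?_⟩
        have hx12 : x 1 = x 2 := by
          have h : (2:ℂ) * Γ * (x 1 - x 2) = 0 := by linear_combination h2 - h1
          rcases mul_eq_zero.mp h with h' | h'
          · exact absurd h' hΓc2
          · exact (sub_eq_zero.mp h')
        have e0 : x 0 = I * x 1 := by
          have h : (2:ℂ) * Γ * (x 0 - I * x 1) = 0 := by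
            linear_combination h0 - I * (Γ:ℂ) * hx12
          rcases mul_eq_zero.mp h with h' | h'
          · exact absurd h' hΓc2
          · exact (sub_eq_zero.mp h')
        have e3 : x 3 = I * x 1 := by
          have h : (2:ℂ) * Γ * (x 3 - I * x 1) = 0 := by
            linear_combination h3 - I * (Γ:ℂ) * hx12
          rcases mul_eq_zero.mp h with h' | h'
          · exact absurd h' hΓc2
          · exact (sub_eq_zero.mp h')
        funext i
        fin_cases i
        · simp [e0]; ring
        · simp
        · simp [hx12]
        · simp [e3]; ring
      · rw [Submodule.span_le, Set.singleton_subset_iff]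
        rw [SetLike.mem_coe, Module.End.mem_eigenspace_iff, Matrix.toLin'_apply, hH]
        funext i
        fin_cases i
        · simp [Matrix.mulVec, dotProduct, Fin.sum_univ_four, hlam']; ring
        · simp [Matrix.mulVec, dotProduct, Fin.sum_univ_four, hlam']
          linear_combination (-2*(Γ:ℂ)) * Complex.I_sq
        · simp [Matrix.mulVec, dotProduct, Fin.sum_univ_four, hlam']
          linear_combination (-2*(Γ:ℂ)) * Complex.I_sq
        · simp [Matrix.mulVec, dotProduct, Fin.sum_univ_four, hlam']; ring
    rw [heig]
    refine finrank_span_singleton ?_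
    intro h
    have := congrFun h 1
    simp at this
  · -- not diagonalizable
    rintro ⟨P, d, hPdet, hPd⟩
    have hPP : P⁻¹ * P = 1 := Matrix.nonsing_inv_mul P hPdet
    have hPP' : P * P⁻¹ = 1 := Matrix.mul_nonsing_inv P hPdet
    have hHPDP : H = P * Matrix.diagonal d * P⁻¹ := by
      have h := congrArg (fun M => P * M * P⁻¹) hPd
      simp only [← Matrix.mul_assoc] at h
      rw [hPP', Matrix.one_mul, Matrix.mul_assoc, hPP', Matrix.mul_one] at h
      exact h.symm ▸ (by rw [← h])
    have hfac : ∀ a : ℂ, H - a • (1 : Matrix (Fin 4) (Fin 4) ℂ)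
        = P * Matrix.diagonal (fun i => d i - a) * P⁻¹ := by
      intro a
      have h1 : a • (1 : Matrix (Fin 4) (Fin 4) ℂ)
          = P * (a • (1 : Matrix (Fin 4) (Fin 4) ℂ)) * P⁻¹ := by
        rw [mul_smul_comm, smul_mul_assoc, Matrix.mul_one, hPP']
      rw [hHPDP]
      conv_lhs => rw [h1]
      rw [← Matrix.sub_mul, ← Matrix.mul_sub, smul_one_eq_diag, ← Matrix.diagonal_sub]
    -- every d i is a root of the characteristic polynomial
    have hroot : ∀ i, (d i - lam) * ((d i - (lam + 2*Γ)) * (d i - (lam - 2*Γ))) = 0 := by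
      intro i
      have hdet : ((d i) • (1 : Matrix (Fin 4) (Fin 4) ℂ) - H).det = 0 := by
        have hneg : (d i) • (1 : Matrix (Fin 4) (Fin 4) ℂ) - H
            = P * Matrix.diagonal (fun j => d i - d j) * P⁻¹ := by
          calc (d i) • (1 : Matrix (Fin 4) (Fin 4) ℂ) - H
              = -(H - (d i) • (1 : Matrix (Fin 4) (Fin 4) ℂ)) := (neg_sub _ _).symm
            _ = -(P * Matrix.diagonal (fun j => d j - d i) * P⁻¹) := by rw [hfac]
            _ = P * (-(Matrix.diagonal (fun j => d j - d i))) * P⁻¹ := by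
                rw [Matrix.mul_neg, Matrix.neg_mul]
            _ = P * Matrix.diagonal (fun j => d i - d j) * P⁻¹ := by
                have hnegd : -(Matrix.diagonal (fun j => d j - d i))
                    = Matrix.diagonal (fun j => d i - d j) := by
                  ext a b
                  by_cases hab : a = b
                  · subst hab; simp
                  · simp [Matrix.diagonal_apply_ne _ hab]
                rw [hnegd]
        rw [hneg, Matrix.det_mul, Matrix.det_mul, Matrix.det_diagonal]
        have hzero : ∏ j, (d i - d j) = 0 := by
          apply Finset.prod_eq_zero (Finset.mem_univ i)
          ring
        rw [hzero]
        ring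
      have heval := eval_charpoly_aux H (d i)
      rw [hcp] at heval
      simp only [Polynomial.eval_mul, Polynomial.eval_pow, Polynomial.eval_sub,
        Polynomial.eval_X, Polynomial.eval_C] at heval
      rw [hdet] at heval
      have hz : (d i - lam)^2 * ((d i - (lam + 2*Γ)) * (d i - (lam - 2*Γ))) = 0 := heval
      rcases mul_eq_zero.mp hz with h' | h'
      · have h'' : d i - lam = 0 := pow_eq_zero_iff (n := 2) (by norm_num) |>.mp h'
        rw [h'']; ring
      · rw [h']; ring
    -- hence the cubic annihilates H
    have hzero : (H - lam • (1 : Matrix (Fin 4) (Fin 4) ℂ))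
        * ((H - (lam + 2*Γ) • (1 : Matrix (Fin 4) (Fin 4) ℂ))
          * (H - (lam - 2*Γ) • (1 : Matrix (Fin 4) (Fin 4) ℂ))) = 0 := by
      rw [hfac, hfac, hfac]
      have collapse : ∀ (A B : Matrix (Fin 4) (Fin 4) ℂ),
          (P * A * P⁻¹) * (P * B * P⁻¹) = P * (A * B) * P⁻¹ := by
        intro A B
        simp only [Matrix.mul_assoc]
        rw [← Matrix.mul_assoc P⁻¹ P, hPP, Matrix.one_mul]
      rw [collapse, collapse, Matrix.diagonal_mul_diagonal, Matrix.diagonal_mul_diagonal]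
      have hdiag0 : Matrix.diagonal
            (fun i => (d i - lam) * ((d i - (lam + 2*Γ)) * (d i - (lam - 2*Γ))))
          = (0 : Matrix (Fin 4) (Fin 4) ℂ) := by
        ext a b
        by_cases hab : a = b
        · subst hab; simp [hroot a]
        · simp [Matrix.diagonal_apply_ne _ hab]
      rw [hdiag0, Matrix.mul_zero, Matrix.zero_mul]
    -- but its (0,0) entry is -4Γ³ ≠ 0
    have h00 := congrFun (congrFun hzero 0) 0
    rw [hH] at h00
    simp [Matrix.mul_apply, Fin.sum_univ_four, Matrix.sub_apply, Matrix.smul_apply,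
      Matrix.one_apply, hlam'] at h00
    have hg3 : (Γ:ℂ)^3 = 0 := by
      linear_combination (-1/4 : ℂ) * h00 + (Γ:ℂ)^3 * Complex.I_sq
    exact hΓc (pow_eq_zero_iff (n := 3) (by norm_num) |>.mp hg3)
end

section
/- At the exceptional point (v' = 0, ΔU = 4Γ, Γ > 0), with S₁ = (1/√2)·[[1,0,0,1],[0,1,1,0],[0,-1,1,0],[-1,0,0,1]] and S̃₂ = [[1,0,0,0],[0,1,0,0],[0,0,1,-1/ΔU],[0,0,i,i/ΔU]], one has S̃₂⁻¹S₁⁻¹ H⁽²⁾_eff S₁S̃₂ = diag-block matrix with diagonal entries (2ε+U-2iΓ, 2ε+U'-2iΓ, 2ε+Ū-iΔU/2, 2ε+Ū-iΔU/2) and a single 1 in the (3,4) entry (a Jordan normal form). -/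
open Complex Matrix

set_option maxHeartbeats 1000000

theorem stmt_6 (ε Γ U U' : ℝ) (hΓ : 0 < Γ) (hEP : U - U' = 4 * Γ)
    (H : Matrix (Fin 4) (Fin 4) ℂ)
    (hH : H = !![2 * ε + U - 2 * I * Γ, -(I * Γ), -(I * Γ), 0;
                 -(I * Γ), 2 * ε + U' - 2 * I * Γ, 0, -(I * Γ);
                 -(I * Γ), 0, 2 * ε + U' - 2 * I * Γ, -(I * Γ);
                 0, -(I * Γ), -(I * Γ), 2 * ε + U - 2 * I * Γ])
    (S₁ : Matrix (Fin 4) (Fin 4) ℂ)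
    (hS₁ : S₁ = ((1 / Real.sqrt 2 : ℝ) : ℂ) •
      !![(1 : ℂ), 0, 0, 1; 0, 1, 1, 0; 0, -1, 1, 0; -1, 0, 0, 1])
    (S₂ : Matrix (Fin 4) (Fin 4) ℂ)
    (hS₂ : S₂ = !![(1 : ℂ), 0, 0, 0; 0, 1, 0, 0;
                  0, 0, 1, -(1 / ((U - U' : ℝ) : ℂ));
                  0, 0, I, I / ((U - U' : ℝ) : ℂ)]) :
    S₂⁻¹ * S₁⁻¹ * H * S₁ * S₂ =
      !![2 * ε + U - 2 * I * Γ, 0, 0, 0;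
         0, 2 * ε + U' - 2 * I * Γ, 0, 0;
         0, 0, 2 * ε + ((U + U') / 2 : ℝ) - I * ((U - U' : ℝ) : ℂ) / 2, 1;
         0, 0, 0, 2 * ε + ((U + U') / 2 : ℝ) - I * ((U - U' : ℝ) : ℂ) / 2] := by
  have hU : U = U' + 4 * Γ := by linarith
  subst hU
  set s : ℂ := ((1 / Real.sqrt 2 : ℝ) : ℂ) with hs_def
  have hs : s * s = 1 / 2 := by
    rw [hs_def, ← Complex.ofReal_mul]
    have : (1 / Real.sqrt 2) * (1 / Real.sqrt 2) = 1 / 2 := by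
      rw [div_mul_div_comm, Real.mul_self_sqrt (by norm_num : (0:ℝ) ≤ 2)]
      norm_num
    rw [this]; norm_num
  have hΓ0 : (Γ : ℂ) ≠ 0 := by exact_mod_cast hΓ.ne'
  have hdr : ((U' + 4 * Γ - U' : ℝ) : ℂ) = 4 * Γ := by push_cast; ring
  -- left inverses
  have hL₁ : (s • !![(1 : ℂ), 0, 0, -1; 0, 1, -1, 0; 0, 1, 1, 0; 1, 0, 0, 1]) * S₁ = 1 := by
    rw [hS₁, Matrix.smul_mul, Matrix.mul_smul, smul_smul, hs]
    ext i j
    fin_cases i <;> fin_cases j <;>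
      simp [Matrix.mul_apply, Fin.sum_univ_four, Matrix.one_apply, Fin.ext_iff,
        Matrix.vecHead, Matrix.vecTail, show ((3:Fin 4):ℕ) = 3 from rfl] <;>
      norm_num
  have hL₂ : (!![(1 : ℂ), 0, 0, 0; 0, 1, 0, 0;
      0, 0, 1/2, -I/2; 0, 0, -(4*Γ)/2, -I*(4*Γ)/2]) * S₂ = 1 := by
    rw [hS₂, hdr]
    ext i j
    fin_cases i <;> fin_cases j <;>
      simp [Matrix.mul_apply, Fin.sum_univ_four, Matrix.one_apply, Fin.ext_iff,
        Matrix.vecHead, Matrix.vecTail, show ((3:Fin 4):ℕ) = 3 from rfl] <;>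
      field_simp <;> ring_nf <;> simp [Complex.I_sq] <;> ring_nf
  have h1 : Invertible S₁ := invertibleOfLeftInverse _ _ hL₁
  have h2 : Invertible S₂ := invertibleOfLeftInverse _ _ hL₂
  set J : Matrix (Fin 4) (Fin 4) ℂ :=
      !![2 * ε + ((U' + 4 * Γ : ℝ) : ℂ) - 2 * I * Γ, 0, 0, 0;
         0, 2 * ε + U' - 2 * I * Γ, 0, 0;
         0, 0, 2 * ε + (((U' + 4 * Γ) + U') / 2 : ℝ) - I * (((U' + 4 * Γ) - U' : ℝ) : ℂ) / 2, 1;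
         0, 0, 0, 2 * ε + (((U' + 4 * Γ) + U') / 2 : ℝ) - I * (((U' + 4 * Γ) - U' : ℝ) : ℂ) / 2]
      with hJ
  have key : H * (S₁ * S₂) = S₁ * (S₂ * J) := by
    rw [hH, hS₁, hS₂, hJ, hdr]
    simp only [Matrix.smul_mul, Matrix.mul_smul]
    congr 1
    ext i j
    fin_cases i <;> fin_cases j <;>
      simp [Matrix.mul_apply, Fin.sum_univ_four,
        Matrix.vecHead, Matrix.vecTail] <;>
      push_cast <;> field_simp <;> ring_nf <;>
      simp [Complex.I_sq] <;> push_cast <;> ring_nf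
  calc S₂⁻¹ * S₁⁻¹ * H * S₁ * S₂
      = S₂⁻¹ * (S₁⁻¹ * (H * (S₁ * S₂))) := by
        simp only [Matrix.mul_assoc]
    _ = S₂⁻¹ * (S₁⁻¹ * (S₁ * (S₂ * J))) := by rw [key]
    _ = J := by
        rw [Matrix.inv_mul_cancel_left_of_invertible, Matrix.inv_mul_cancel_left_of_invertible]
end

section
/- For 0 < ΔU < 4Γ, setting η = √(16Γ² - (ΔU)²), the survival probability Q(t) = [1 + (16Γ²/η²)sinh²(ηt/2)]e^{-4Γt} satisfies 0 < Q(t) ≤ 1 for all t ≥ 0, and Q(t)·e^{(4Γ-η)t} converges to 4Γ²/η² as t → ∞ (i.e. the decay rate is 4Γ - η). -/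
open Real Filter

lemma aux_sinh_convex (c x : ℝ) (hc0 : 0 ≤ c) (hc1 : c ≤ 1) (hx : 0 ≤ x) :
    Real.sinh (c * x) ≤ c * Real.sinh x := by
  have hmono : MonotoneOn (fun y => c * Real.sinh y - Real.sinh (c * y)) (Set.Ici (0:ℝ)) := by
    have hdiff : ∀ y : ℝ, HasDerivAt (fun y => c * Real.sinh y - Real.sinh (c * y))
        (c * Real.cosh y - Real.cosh (c * y) * c) y := by
      intro y
      have hcy : HasDerivAt (fun y : ℝ => c * y) c y := by
        simpa using (hasDerivAt_id y).const_mul c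
      exact ((Real.hasDerivAt_sinh y).const_mul c).sub
        ((Real.hasDerivAt_sinh (c * y)).comp y hcy)
    apply monotoneOn_of_deriv_nonneg (convex_Ici 0)
    · exact ((continuous_const.mul Real.continuous_sinh).sub
        (Real.continuous_sinh.comp (continuous_const.mul continuous_id))).continuousOn
    · intro y _
      exact (hdiff y).differentiableAt.differentiableWithinAt
    · intro y hy
      rw [(hdiff y).deriv]
      have hy' : 0 < y := by simpa [interior_Ici] using hy
      have hcc : Real.cosh (c * y) ≤ Real.cosh y := by
        rw [Real.cosh_le_cosh, abs_of_nonneg (mul_nonneg hc0 hy'.le), abs_of_nonneg hy'.le]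
        nlinarith
      nlinarith
  have := hmono (Set.self_mem_Ici) (Set.mem_Ici.mpr hx) hx
  simp only [mul_zero, Real.sinh_zero, sub_zero, sub_self] at this
  linarith

theorem stmt_11 (Γ ΔU : ℝ) (hΓ : 0 < Γ) (h1 : 0 < ΔU) (h2 : ΔU < 4 * Γ)
    (η : ℝ) (hη : η = Real.sqrt (16 * Γ ^ 2 - ΔU ^ 2))
    (Q : ℝ → ℝ)
    (hQ : ∀ t, Q t = (1 + (16 * Γ ^ 2 / η ^ 2) * Real.sinh (η * t / 2) ^ 2) *
      Real.exp (-4 * Γ * t)) :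
    (∀ t ≥ (0 : ℝ), 0 < Q t ∧ Q t ≤ 1) ∧
    Tendsto (fun t => Q t * Real.exp ((4 * Γ - η) * t)) atTop
      (nhds (4 * Γ ^ 2 / η ^ 2)) := by
  have hΔ : 0 < 16 * Γ ^ 2 - ΔU ^ 2 := by nlinarith
  have hη2 : η ^ 2 = 16 * Γ ^ 2 - ΔU ^ 2 := by rw [hη, Real.sq_sqrt hΔ.le]
  have hηpos : 0 < η := by rw [hη]; exact Real.sqrt_pos.mpr hΔ
  have hηlt : η < 4 * Γ := by nlinarith
  constructor
  · intro t ht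
    have hsnn : 0 ≤ Real.sinh (η * t / 2) := by simpa using Real.sinh_le_sinh.mpr (by nlinarith [mul_nonneg hηpos.le ht])
    have hepos : 0 < Real.exp (-4 * Γ * t) := Real.exp_pos _
    refine ⟨by rw [hQ]; positivity, ?_⟩
    rw [hQ]
    have key := aux_sinh_convex (η / (4 * Γ)) (2 * Γ * t)
      (div_nonneg hηpos.le (by linarith))
      (by rw [div_le_one (by linarith)]; linarith) (by nlinarith)
    have harg : η / (4 * Γ) * (2 * Γ * t) = η * t / 2 := by field_simp [hΓ.ne']; ring
    rw [harg] at key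
    have hs2nn : 0 ≤ Real.sinh (2 * Γ * t) := by simpa using Real.sinh_le_sinh.mpr (by nlinarith [mul_nonneg hηpos.le ht])
    have key' : 4 * Γ * Real.sinh (η * t / 2) ≤ η * Real.sinh (2 * Γ * t) := by
      calc 4 * Γ * Real.sinh (η * t / 2) ≤ 4 * Γ * (η / (4 * Γ) * Real.sinh (2 * Γ * t)) := mul_le_mul_of_nonneg_left key (by linarith)
        _ = η * Real.sinh (2 * Γ * t) := by field_simp [hΓ.ne']
    have hsq : 16 * Γ ^ 2 / η ^ 2 * Real.sinh (η * t / 2) ^ 2 ≤ Real.sinh (2 * Γ * t) ^ 2 := by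
      rw [div_mul_eq_mul_div, div_le_iff₀ (by positivity)]
      nlinarith [mul_self_le_mul_self (by nlinarith : (0:ℝ) ≤ 4 * Γ * Real.sinh (η * t / 2)) key']
    have hch : Real.cosh (2 * Γ * t) ^ 2 ≤ Real.exp (4 * Γ * t) := by
      rw [Real.cosh_eq]
      have hle : Real.exp (-(2 * Γ * t)) ≤ Real.exp (2 * Γ * t) :=
        Real.exp_le_exp.mpr (by nlinarith)
      have hmul : Real.exp (2 * Γ * t) * Real.exp (2 * Γ * t) = Real.exp (4 * Γ * t) := by
        rw [← Real.exp_add]; ring_nf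
      nlinarith [Real.exp_pos (2 * Γ * t), Real.exp_pos (-(2 * Γ * t))]
    have hB : 1 + 16 * Γ ^ 2 / η ^ 2 * Real.sinh (η * t / 2) ^ 2 ≤ Real.exp (4 * Γ * t) := by
      have := Real.cosh_sq (2 * Γ * t)
      nlinarith
    calc (1 + 16 * Γ ^ 2 / η ^ 2 * Real.sinh (η * t / 2) ^ 2) * Real.exp (-4 * Γ * t)
        ≤ Real.exp (4 * Γ * t) * Real.exp (-4 * Γ * t) :=
          mul_le_mul_of_nonneg_right hB hepos.le
      _ = 1 := by rw [← Real.exp_add]; ring_nf; exact Real.exp_zero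
  · have hfun : (fun t => Q t * Real.exp ((4 * Γ - η) * t)) =
        (fun u => u + 4 * Γ ^ 2 / η ^ 2 * (1 - u) ^ 2) ∘ (fun t => Real.exp (-(η * t))) := by
      funext t
      simp only [Function.comp_apply, hQ, Real.sinh_eq]
      have e1 : Real.exp (η * t / 2) * Real.exp (-(η * t / 2)) = 1 := by
        rw [← Real.exp_add]; simp
      have e2 : Real.exp (-(η * t)) = Real.exp (-(η * t / 2)) * Real.exp (-(η * t / 2)) := by
        rw [← Real.exp_add]; ring_nf
      have e3 : Real.exp (-4 * Γ * t) * Real.exp ((4 * Γ - η) * t) =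
          Real.exp (-(η * t / 2)) * Real.exp (-(η * t / 2)) := by
        rw [← Real.exp_add, ← Real.exp_add]; congr 1; ring
      rw [mul_assoc, e3, e2]
      linear_combination (16 * Γ ^ 2 / η ^ 2 / 4) *
        (Real.exp (η * t / 2) * Real.exp (-(η * t / 2)) + 1 -
          2 * Real.exp (-(η * t / 2)) ^ 2) * e1
    rw [hfun]
    have h0 : Tendsto (fun t => Real.exp (-(η * t))) atTop (nhds 0) := by
      have hlin : Tendsto (fun t : ℝ => η * t) atTop atTop :=
        Tendsto.const_mul_atTop hηpos tendsto_id
      exact Real.tendsto_exp_neg_atTop_nhds_zero.comp hlin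
    have hc : Continuous (fun u : ℝ => u + 4 * Γ ^ 2 / η ^ 2 * (1 - u) ^ 2) := continuous_id.add (continuous_const.mul ((continuous_const.sub continuous_id).pow 2))
    have := (hc.tendsto 0).comp h0
    simpa using this
end

section
/- The effective Hamiltonian H_eff satisfies the commutation relations [H_eff, η₊] = -(2(ε - iΓ) + U + 2U'N)η₊ and [H_eff, η₋] = η₋(2(ε - iΓ) + U + 2U'N), where N = Σ_{α,σ} n_{ασ} is the total number operator; consequently, if H_eff|v⟩ = E|v⟩ then H_eff η₋|v⟩ = (E + 2(ε-iΓ) + U + 2U'·n)η₋|v⟩ whenever |v⟩ is also an N-eigenstate with eigenvalue n. -/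
open Complex

set_option maxHeartbeats 1000000 in
/-- commutation relations of the effective Hamiltonian with the
charge operators `η±`, and the resulting shift of eigenvalues by `η₋`. -/
theorem stmt_19 {A : Type*} [Ring A] [Algebra ℂ A]
    (a ad : Fin 2 → Bool → A)
    (hcar1 : ∀ α β σ τ, a α σ * ad β τ + ad β τ * a α σ =
      if α = β ∧ σ = τ then 1 else 0)
    (hcar2 : ∀ α β σ τ, a α σ * a β τ + a β τ * a α σ = 0)
    (hcar3 : ∀ α β σ τ, ad α σ * ad β τ + ad β τ * ad α σ = 0)
    (ε Γ U U' v' : ℝ)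
    (H ηp ηm N C : A)
    (hH : H = (∑ α : Fin 2, ∑ σ : Bool,
        (((ε : ℂ) - I * Γ) • (ad α σ * a α σ) +
         ((v' : ℂ) - I * Γ) • (ad α σ * a (1 - α) σ)))
      + (U : ℂ) • ∑ α : Fin 2, (ad α true * a α true) * (ad α false * a α false)
      + (U' : ℂ) • ∑ σ : Bool, ∑ τ : Bool,
          (ad 0 σ * a 0 σ) * (ad 1 τ * a 1 τ))
    (hηp : ηp = ∑ α : Fin 2, ((-1 : ℂ) ^ (α : ℕ)) • (a α false * a α true))
    (hηm : ηm = ∑ α : Fin 2, ((-1 : ℂ) ^ (α : ℕ)) • (ad α true * ad α false))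
    (hN : N = ∑ α : Fin 2, ∑ σ : Bool, ad α σ * a α σ)
    (hC : C = (2 * ((ε : ℂ) - I * Γ) + U) • (1 : A) + (2 * (U' : ℂ)) • N) :
    H * ηp - ηp * H = -(C * ηp) ∧
    H * ηm - ηm * H = ηm * C ∧
    (∀ (M : Type) (_ : AddCommGroup M) (_ : Module ℂ M)
        (ρ : A →ₐ[ℂ] Module.End ℂ M) (v : M) (E n : ℂ),
      ρ H v = E • v → ρ N v = n • v →
      ρ H (ρ ηm v) = (E + 2 * ((ε : ℂ) - I * Γ) + U + 2 * U' * n) • ρ ηm v) := by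
  have hX2 : ∀ (α β : Fin 2) (σ τ : Bool) (x : A), a α σ * (ad β τ * x) =
      (if α = β ∧ σ = τ then x else 0) - ad β τ * (a α σ * x) := by
    intro α β σ τ x
    rw [← mul_assoc, eq_sub_of_add_eq (hcar1 α β σ τ), sub_mul, ite_mul, one_mul,
      zero_mul, mul_assoc]
  have hX1 : ∀ (α β : Fin 2) (σ τ : Bool), a α σ * ad β τ =
      (if α = β ∧ σ = τ then 1 else 0) - ad β τ * a α σ :=
    fun α β σ τ => eq_sub_of_add_eq (hcar1 α β σ τ)
  have hA0 : ∀ (α : Fin 2) (σ : Bool), a α σ * a α σ = 0 := by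
    intro α σ
    have h2 : (2:ℂ) • (a α σ * a α σ) = 0 := by rw [two_smul]; exact hcar2 α α σ σ
    calc a α σ * a α σ = ((2:ℂ)⁻¹ * 2) • (a α σ * a α σ) := by norm_num
    _ = (2:ℂ)⁻¹ • ((2:ℂ) • (a α σ * a α σ)) := by rw [mul_smul]
    _ = 0 := by rw [h2, smul_zero]
  have hA0' : ∀ (α : Fin 2) (σ : Bool) (x : A), a α σ * (a α σ * x) = 0 := by
    intro α σ x; rw [← mul_assoc, hA0, zero_mul]
  have hD0 : ∀ (α : Fin 2) (σ : Bool), ad α σ * ad α σ = 0 := by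
    intro α σ
    have h2 : (2:ℂ) • (ad α σ * ad α σ) = 0 := by rw [two_smul]; exact hcar3 α α σ σ
    calc ad α σ * ad α σ = ((2:ℂ)⁻¹ * 2) • (ad α σ * ad α σ) := by norm_num
    _ = (2:ℂ)⁻¹ • ((2:ℂ) • (ad α σ * ad α σ)) := by rw [mul_smul]
    _ = 0 := by rw [h2, smul_zero]
  have hD0' : ∀ (α : Fin 2) (σ : Bool) (x : A), ad α σ * (ad α σ * x) = 0 := by
    intro α σ x; rw [← mul_assoc, hD0, zero_mul]
  have hA1 : ∀ (α β : Fin 2) (σ τ : Bool), 2*(β:ℕ) + cond τ 1 0 < 2*(α:ℕ) + cond σ 1 0 →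
      a α σ * a β τ = -(a β τ * a α σ) :=
    fun α β σ τ _ => eq_neg_of_add_eq_zero_left (hcar2 α β σ τ)
  have hA2 : ∀ (α β : Fin 2) (σ τ : Bool), 2*(β:ℕ) + cond τ 1 0 < 2*(α:ℕ) + cond σ 1 0 →
      ∀ (x : A), a α σ * (a β τ * x) = -(a β τ * (a α σ * x)) := by
    intro α β σ τ h x
    rw [← mul_assoc, hA1 α β σ τ h, neg_mul, mul_assoc]
  have hD1 : ∀ (α β : Fin 2) (σ τ : Bool), 2*(β:ℕ) + cond τ 1 0 < 2*(α:ℕ) + cond σ 1 0 →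
      ad α σ * ad β τ = -(ad β τ * ad α σ) :=
    fun α β σ τ _ => eq_neg_of_add_eq_zero_left (hcar3 α β σ τ)
  have hD2 : ∀ (α β : Fin 2) (σ τ : Bool), 2*(β:ℕ) + cond τ 1 0 < 2*(α:ℕ) + cond σ 1 0 →
      ∀ (x : A), ad α σ * (ad β τ * x) = -(ad β τ * (ad α σ * x)) := by
    intro α β σ τ h x
    rw [← mul_assoc, hD1 α β σ τ h, neg_mul, mul_assoc]
  have key1 : H * ηp - ηp * H = -(C * ηp) := by
    subst hH hηp hηm hN hC
    simp only [Fin.sum_univ_two, Fintype.sum_bool, show (1:Fin 2) - 0 = 1 from rfl,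
      show (1:Fin 2) - 1 = 0 from rfl, Fin.val_zero, Fin.val_one, pow_zero, pow_one,
      one_smul, neg_smul, neg_neg]
    simp (config := { decide := true }) only [mul_add, add_mul, mul_sub, sub_mul,
      mul_neg, neg_mul, smul_mul_assoc, mul_smul_comm, mul_assoc, mul_one, one_mul,
      mul_zero, zero_mul, smul_add, smul_sub, smul_neg, smul_smul, smul_zero,
      if_true, if_false, hX2, hX1, hA0, hA0', hD0, hD0',
      (hA1 0 0 true false (by decide)),
      (hA1 1 0 false false (by decide)),
      (hA1 1 0 false true (by decide)),
      (hA1 1 0 true false (by decide)),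
      (hA1 1 0 true true (by decide)),
      (hA1 1 1 true false (by decide)),
      (hA2 0 0 true false (by decide)),
      (hA2 1 0 false false (by decide)),
      (hA2 1 0 false true (by decide)),
      (hA2 1 0 true false (by decide)),
      (hA2 1 0 true true (by decide)),
      (hA2 1 1 true false (by decide)),
      (hD1 0 0 true false (by decide)),
      (hD1 1 0 false false (by decide)),
      (hD1 1 0 false true (by decide)),
      (hD1 1 0 true false (by decide)),
      (hD1 1 0 true true (by decide)),
      (hD1 1 1 true false (by decide)),
      (hD2 0 0 true false (by decide)),
      (hD2 1 0 false false (by decide)),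
      (hD2 1 0 false true (by decide)),
      (hD2 1 0 true false (by decide)),
      (hD2 1 0 true true (by decide)),
      (hD2 1 1 true false (by decide))]
    module
  have key2 : H * ηm - ηm * H = ηm * C := by
    subst hH hηp hηm hN hC
    simp only [Fin.sum_univ_two, Fintype.sum_bool, show (1:Fin 2) - 0 = 1 from rfl,
      show (1:Fin 2) - 1 = 0 from rfl, Fin.val_zero, Fin.val_one, pow_zero, pow_one,
      one_smul, neg_smul, neg_neg]
    simp (config := { decide := true }) only [mul_add, add_mul, mul_sub, sub_mul,
      mul_neg, neg_mul, smul_mul_assoc, mul_smul_comm, mul_assoc, mul_one, one_mul,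
      mul_zero, zero_mul, smul_add, smul_sub, smul_neg, smul_smul, smul_zero,
      if_true, if_false, hX2, hX1, hA0, hA0', hD0, hD0',
      (hA1 0 0 true false (by decide)),
      (hA1 1 0 false false (by decide)),
      (hA1 1 0 false true (by decide)),
      (hA1 1 0 true false (by decide)),
      (hA1 1 0 true true (by decide)),
      (hA1 1 1 true false (by decide)),
      (hA2 0 0 true false (by decide)),
      (hA2 1 0 false false (by decide)),
      (hA2 1 0 false true (by decide)),
      (hA2 1 0 true false (by decide)),
      (hA2 1 0 true true (by decide)),
      (hA2 1 1 true false (by decide)),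
      (hD1 0 0 true false (by decide)),
      (hD1 1 0 false false (by decide)),
      (hD1 1 0 false true (by decide)),
      (hD1 1 0 true false (by decide)),
      (hD1 1 0 true true (by decide)),
      (hD1 1 1 true false (by decide)),
      (hD2 0 0 true false (by decide)),
      (hD2 1 0 false false (by decide)),
      (hD2 1 0 false true (by decide)),
      (hD2 1 0 true false (by decide)),
      (hD2 1 0 true true (by decide)),
      (hD2 1 1 true false (by decide))]
    module
  refine ⟨key1, key2, ?_⟩
  intro M _ _ ρ v E n hv hn
  have hmul : H * ηm = ηm * H + ηm * C := by
    rw [← key2]; abel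
  have hCv : ρ C v = (2 * ((ε : ℂ) - I * Γ) + U) • v + (2 * (U' : ℂ)) • (n • v) := by
    rw [hC]
    simp only [map_add, map_smul, map_one, Module.End.one_apply, LinearMap.add_apply,
      LinearMap.smul_apply, hn]
  have h1 : ρ H (ρ ηm v) = ρ ηm (ρ H v) + ρ ηm (ρ C v) := by
    have := congrArg (fun x => ρ x v) hmul
    simpa only [map_mul, map_add, Module.End.mul_apply, LinearMap.add_apply] using this
  rw [h1, hv, hCv, map_smul, map_add, map_smul, map_smul, map_smul]
  module
end
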